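/- arXiv:1910.11891 — 2 statements merged into one kernel-verified Lean document; each statement's English description precedes it below -/
import Mathlib

section
/- Let G be a simple graph of order 11 with at least 35 edges. Then G contains a K_6 minor. -/
attribute [local instance] Classical.propDecidable

/-- `G` contains a `K_t` minor: `t` pairwise disjoint nonempty branch sets, each inducing a
connected subgraph of `G`, with an edge of `G` between any two of them. -/
def SimpleGraph.HasCompleteMinor {V : Type*} (G : SimpleGraph V) (t : ℕ) : Prop :=
  ∃ B : Fin t → Set V,
    (∀ i, (B i).Nonempty) ∧
    (∀ i, (G.induce (B i)).Connected) ∧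
    (∀ i j, i ≠ j → Disjoint (B i) (B j)) ∧
    (∀ i j, i ≠ j → ∃ u ∈ B i, ∃ v ∈ B j, G.Adj u v)

/-!
Mader's induction for the extremal bound `4n - 9` for `K₆` minors, in the range `n ≤ 11` where a
counting argument settles the last case. Trim the graph to exactly `4n - 9` edges. A vertex of
degree at most 4 can then be deleted, and an edge in at most three triangles contracted, keeping
the bound on one vertex fewer. Otherwise every edge lies in at least four triangles, so a vertex
of degree 5 spans a `K₆` with its neighbours. If all degrees are at least 6, write `a w` for the
number of non-neighbours of `w`: for an edge `uv`, the non-neighbours of `u` or `v` avoid the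
common neighbours, so `a u + a v ≤ #(common non-neighbours) + n - 6`. Summing over ordered edges,
the right-hand side counts paths of length two in the complement, and with `a w ≤ n - 7` this
gives `20 ē + 6 e ≤ n (e + ē)` for the `e` edges and `ē` non-edges, false for `e = 4n - 9` and
`7 ≤ n ≤ 11`.
-/

open Finset Function

namespace SimpleGraph

variable {V W : Type*} {G : SimpleGraph V} {t : ℕ}

theorem Reachable.lift {H : SimpleGraph W} (f : V → W)
    (hf : ∀ a b, G.Adj a b → H.Reachable (f a) (f b)) {a b : V} (h : G.Reachable a b) :
    H.Reachable (f a) (f b) := by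
  obtain ⟨p⟩ := h
  induction p with
  | nil => rfl
  | cons hadj _ ih => exact (hf _ _ hadj).trans ih

theorem HasCompleteMinor.map {H : SimpleGraph W} (f : G →g H) (hf : Injective f)
    (h : G.HasCompleteMinor t) : H.HasCompleteMinor t := by
  obtain ⟨B, hne, hconn, hdisj, hadj⟩ := h
  refine ⟨fun i => f '' B i, fun i => (hne i).image f, fun i => ?_,
    fun i j hij => (Set.disjoint_image_iff hf).2 (hdisj i j hij), fun i j hij => ?_⟩
  · refine (hconn i).map (induceHom f (Set.mapsTo_image f (B i))) ?_
    rintro ⟨_, x, hx, rfl⟩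
    exact ⟨⟨x, hx⟩, rfl⟩
  · obtain ⟨u, hu, v, hv, huv⟩ := hadj i j hij
    exact ⟨f u, Set.mem_image_of_mem f hu, f v, Set.mem_image_of_mem f hv, f.map_rel huv⟩

theorem HasCompleteMinor.mono {H : SimpleGraph V} (hGH : G ≤ H) (h : G.HasCompleteMinor t) :
    H.HasCompleteMinor t :=
  h.map (Hom.ofLE hGH) injective_id

theorem HasCompleteMinor.of_induce {s : Set V} (h : (G.induce s).HasCompleteMinor t) :
    G.HasCompleteMinor t :=
  h.map (Embedding.induce (G := G) s).toHom (Embedding.induce (G := G) s).injective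

theorem hasCompleteMinor_completeGraph (t : ℕ) : (completeGraph (Fin t)).HasCompleteMinor t :=
  ⟨fun i => {i}, fun i => Set.singleton_nonempty i, fun _ => Connected.of_subsingleton,
    fun _ _ hij => Set.disjoint_singleton.2 hij, fun i j hij => ⟨i, rfl, j, rfl, hij⟩⟩

theorem HasCompleteMinor.of_not_cliqueFree (h : ¬G.CliqueFree t) : G.HasCompleteMinor t :=
  (hasCompleteMinor_completeGraph t).map (topEmbeddingOfNotCliqueFree h).toHom
    (topEmbeddingOfNotCliqueFree h).injective

/-- The contraction `G / uv` on the vertex type of `G`: `v` is merged into `u` and left isolated,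
so `G / uv` proper is its restriction to `{v}ᶜ`. -/
def contractEdge (G : SimpleGraph V) (u v : V) : SimpleGraph V where
  Adj x y := x ≠ y ∧ x ≠ v ∧ y ≠ v ∧
    (G.Adj x y ∨ (x = u ∧ G.Adj v y) ∨ (y = u ∧ G.Adj v x))
  symm := ⟨fun _ _ ⟨hxy, hx, hy, h⟩ => ⟨hxy.symm, hy, hx, h.imp Adj.symm Or.symm⟩⟩

theorem contractEdge_adj {u v x y : V} : (G.contractEdge u v).Adj x y ↔
    x ≠ y ∧ x ≠ v ∧ y ≠ v ∧
      (G.Adj x y ∨ (x = u ∧ G.Adj v y) ∨ (y = u ∧ G.Adj v x)) :=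
  Iff.rfl

theorem connected_induce_of_contractEdge {u v : V} (huv : G.Adj u v) {B : Set ({v}ᶜ : Set V)}
    (hB : (((G.contractEdge u v).induce {v}ᶜ).induce B).Connected) :
    (G.induce ((↑) '' B ∪ {x | x = v ∧ u ∈ (↑) '' B})).Connected := by
  set T := (↑) '' B ∪ {x | x = v ∧ u ∈ (↑) '' B}
  let f : B → T := fun x => ⟨x, .inl ⟨x, x.2, rfl⟩⟩
  have hf : ∀ x y, (((G.contractEdge u v).induce {v}ᶜ).induce B).Adj x y →
      (G.induce T).Reachable (f x) (f y) := by
    intro x y hxy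
    obtain ⟨-, -, -, hxy | ⟨hxu, hvy⟩ | ⟨hyu, hvx⟩⟩ := contractEdge_adj.1 hxy
    · exact Adj.reachable hxy
    · have hv : v ∈ T := .inr ⟨rfl, hxu ▸ ⟨x, x.2, rfl⟩⟩
      exact (Adj.reachable (show (G.induce T).Adj (f x) ⟨v, hv⟩ by
        rw [induce_adj, show (f x : V) = u from hxu]; exact huv)).trans
        (Adj.reachable (show (G.induce T).Adj ⟨v, hv⟩ (f y) from hvy))
    · have hv : v ∈ T := .inr ⟨rfl, hyu ▸ ⟨y, y.2, rfl⟩⟩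
      exact (Adj.reachable (show (G.induce T).Adj (f x) ⟨v, hv⟩ from hvx.symm)).trans
        (Adj.reachable (show G.Adj v (f y) by rw [show (f y : V) = u from hyu]; exact huv.symm))
  obtain ⟨b⟩ := hB.nonempty
  refine (connected_iff_exists_forall_reachable _).2 ⟨f b, ?_⟩
  rintro ⟨p, ⟨x, hx, rfl⟩ | ⟨hp, w, hw, hwu⟩⟩
  · exact (hB.preconnected b ⟨x, hx⟩).lift f hf
  · exact ((hB.preconnected b ⟨w, hw⟩).lift f hf).trans
      (Adj.reachable (show G.Adj w p by rw [hwu, hp]; exact huv))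

theorem HasCompleteMinor.of_contractEdge {u v : V} (huv : G.Adj u v)
    (h : ((G.contractEdge u v).induce {v}ᶜ).HasCompleteMinor t) : G.HasCompleteMinor t := by
  obtain ⟨B, hne, hconn, hdisj, hadj⟩ := h
  let S : Fin t → Set V := fun i => (↑) '' B i
  have hvS : ∀ i, v ∉ S i := fun i ⟨x, _, hx⟩ => x.2 hx
  have hSdisj : ∀ i j, i ≠ j → Disjoint (S i) (S j) := fun i j hij =>
    (Set.disjoint_image_iff Subtype.val_injective).2 (hdisj i j hij)
  refine ⟨fun i => S i ∪ {x | x = v ∧ u ∈ S i}, fun i => ((hne i).image _).mono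
    Set.subset_union_left, fun i => connected_induce_of_contractEdge huv (hconn i),
    fun i j hij => ?_, fun i j hij => ?_⟩
  · rw [Set.disjoint_left]
    rintro x (hxi | ⟨rfl, hui⟩) (hxj | ⟨hxv, huj⟩)
    · exact Set.disjoint_left.1 (hSdisj i j hij) hxi hxj
    · exact hvS i (hxv ▸ hxi)
    · exact hvS j hxj
    · exact Set.disjoint_left.1 (hSdisj i j hij) hui huj
  · obtain ⟨x, hx, y, hy, hxy⟩ := hadj i j hij
    obtain ⟨-, -, -, hxy | ⟨hxu, hvy⟩ | ⟨hyu, hvx⟩⟩ := contractEdge_adj.1 hxy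
    · exact ⟨x, .inl ⟨x, hx, rfl⟩, y, .inl ⟨y, hy, rfl⟩, hxy⟩
    · exact ⟨v, .inr ⟨rfl, hxu ▸ ⟨x, hx, rfl⟩⟩, y, .inl ⟨y, hy, rfl⟩, hvy⟩
    · exact ⟨x, .inl ⟨x, hx, rfl⟩, v, .inr ⟨rfl, hyu ▸ ⟨y, hy, rfl⟩⟩, hvx.symm⟩

section Finite

variable [Fintype V] [DecidableRel G.Adj]

theorem card_edgeFinset_le_card_edgeFinset_contractEdge_add {u v : V} (huv : G.Adj u v) :
    #G.edgeFinset ≤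
      #(G.contractEdge u v).edgeFinset + #(G.neighborFinset u ∩ G.neighborFinset v) + 1 := by
  set fresh := G.neighborFinset v \ insert u (G.neighborFinset u)
  have hsub : (G.deleteIncidenceSet v).edgeFinset ∪ fresh.image (s(u, ·)) ⊆
      (G.contractEdge u v).edgeFinset := by
    refine union_subset (edgeFinset_mono fun x y hxy => ?_) ?_
    · obtain ⟨hxy, hx, hy⟩ := deleteIncidenceSet_adj.1 hxy
      exact ⟨hxy.ne, hx, hy, .inl hxy⟩
    · simp only [subset_iff, mem_image, mem_edgeFinset, fresh, mem_sdiff, mem_insert,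
        mem_neighborFinset, not_or]
      rintro _ ⟨y, ⟨hvy, hyu, huy⟩, rfl⟩
      exact ⟨Ne.symm hyu, huv.ne, hvy.ne', .inr (.inl ⟨rfl, hvy⟩)⟩
  have hdisj : Disjoint (G.deleteIncidenceSet v).edgeFinset (fresh.image (s(u, ·))) := by
    simp only [disjoint_right, mem_image, mem_edgeFinset, fresh, mem_sdiff, mem_insert,
      mem_neighborFinset, not_or]
    rintro _ ⟨y, ⟨-, -, huy⟩, rfl⟩ h
    exact huy (deleteIncidenceSet_le G v h)
  have hfresh : G.degree v ≤ #fresh + #(G.neighborFinset u ∩ G.neighborFinset v) + 1 := by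
    rw [card_sdiff, insert_inter_of_mem ((G.mem_neighborFinset v u).2 huv.symm),
      card_neighborFinset_eq_degree]
    have hinsert := card_insert_le u (G.neighborFinset u ∩ G.neighborFinset v)
    omega
  have hcard := card_le_card hsub
  rw [card_union_of_disjoint hdisj, card_edgeFinset_deleteIncidenceSet,
    card_image_of_injective _ fun _ _ => Sym2.congr_right.1] at hcard
  have hvE := G.degree_le_card_edgeFinset v
  omega

theorem exists_le_card_edgeFinset_eq {k : ℕ} (hk : k ≤ #G.edgeFinset) :
    ∃ H ≤ G, #H.edgeFinset = k := by
  obtain ⟨s, hs, rfl⟩ := exists_subset_card_eq hk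
  exact ⟨G.deleteEdges ↑(G.edgeFinset \ s), deleteEdges_le _, by
    rw [edgeFinset_deleteEdges, Finset.sdiff_sdiff_eq_self hs]⟩

theorem card_edgeFinset_add_card_edgeFinset_compl :
    #G.edgeFinset + #Gᶜ.edgeFinset = (Fintype.card V).choose 2 := by
  rw [← card_union_of_disjoint (disjoint_edgeFinset.2 disjoint_compl_right), ← edgeFinset_sup]
  convert card_edgeFinset_top_eq_card_choose_two (V := V) using 3
  exact sup_compl_eq_top

theorem sum_sum_neighborFinset {M : Type*} [AddCommMonoid M] (f : V → M) :
    ∑ u, ∑ v ∈ G.neighborFinset u, f v = ∑ v, G.degree v • f v := by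
  rw [sum_comm' (t' := univ) (s' := fun v => G.neighborFinset v) (by simp [adj_comm])]
  simp [card_neighborFinset_eq_degree]

theorem sum_card_neighborFinset_inter (u : V) :
    ∑ v, #(G.neighborFinset u ∩ G.neighborFinset v) =
      ∑ w ∈ G.neighborFinset u, G.degree w := by
  simp only [card_eq_sum_ones, ← card_neighborFinset_eq_degree]
  exact sum_comm' (by simp [adj_comm, and_comm])

theorem degree_compl_add_degree_compl_add_le {u v : V} (huv : G.Adj u v) :
    Gᶜ.degree u + Gᶜ.degree v + #(G.neighborFinset u ∩ G.neighborFinset v) + 2 ≤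
      #(Gᶜ.neighborFinset u ∩ Gᶜ.neighborFinset v) + Fintype.card V := by
  have hcard := card_le_univ
    (insert u (insert v ((Gᶜ.neighborFinset u ∪ Gᶜ.neighborFinset v) ∪
      (G.neighborFinset u ∩ G.neighborFinset v))))
  rw [card_insert_of_notMem (by simp [huv.ne, huv.symm]), card_insert_of_notMem (by simp [huv]),
    card_union_of_disjoint (by rw [Finset.disjoint_left]; simp; tauto)] at hcard
  have hunion := card_union_add_card_inter (Gᶜ.neighborFinset u) (Gᶜ.neighborFinset v)
  rw [card_neighborFinset_eq_degree, card_neighborFinset_eq_degree] at hunion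
  omega

theorem mul_card_edgeFinset_compl_add_le {δ c : ℕ} (hδ : ∀ w, δ ≤ G.degree w)
    (hc : ∀ u v, G.Adj u v → c ≤ #(G.neighborFinset u ∩ G.neighborFinset v)) :
    (3 * δ + 2) * #Gᶜ.edgeFinset + (c + 2) * #G.edgeFinset ≤
      Fintype.card V * (#G.edgeFinset + #Gᶜ.edgeFinset) := by
  set n := Fintype.card V
  have hdeg : ∀ w, G.degree w + Gᶜ.degree w + 1 = n := fun w => by
    have hw := G.degree_lt_card_verts w
    rw [degree_compl]
    omega
  have hedges : ∑ u, ∑ v ∈ G.neighborFinset u, (Gᶜ.degree u + Gᶜ.degree v + (c + 2)) ≤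
      ∑ u, ∑ v ∈ G.neighborFinset u,
        (#(Gᶜ.neighborFinset u ∩ Gᶜ.neighborFinset v) + n) :=
    sum_le_sum fun u _ => sum_le_sum fun v hv => by
      have huv := G.degree_compl_add_degree_compl_add_le ((G.mem_neighborFinset u v).1 hv)
      have hcuv := hc u v ((G.mem_neighborFinset u v).1 hv)
      omega
  have hcherry :
      ∑ u, ∑ v ∈ G.neighborFinset u, #(Gᶜ.neighborFinset u ∩ Gᶜ.neighborFinset v) +
        ∑ w, Gᶜ.degree w ≤ ∑ w, Gᶜ.degree w * Gᶜ.degree w := by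
    have hsq := Gᶜ.sum_sum_neighborFinset (Gᶜ.degree ·)
    simp only [smul_eq_mul] at hsq
    rw [← hsq, ← sum_add_distrib]
    refine sum_le_sum fun u _ => ?_
    rw [← sum_card_neighborFinset_inter, ← sum_erase_add _ _ (mem_univ u), inter_self,
      card_neighborFinset_eq_degree]
    gcongr
    exact fun v hv => mem_erase.2 ⟨((G.mem_neighborFinset u v).1 hv).ne', mem_univ v⟩
  -- the two sides differ by `3 a (d - δ)`, where `d + a + 1 = n`
  have hpoint : ∑ w, (Gᶜ.degree w * Gᶜ.degree w + (3 * δ + 2) * Gᶜ.degree w) ≤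
      ∑ w, (2 * (G.degree w * Gᶜ.degree w) + Gᶜ.degree w + n * Gᶜ.degree w) :=
    sum_le_sum fun w _ => by nlinarith [hdeg w, hδ w]
  simp only [sum_add_distrib, ← mul_sum] at hedges hpoint
  rw [G.sum_sum_neighborFinset] at hedges
  simp only [sum_const, card_neighborFinset_eq_degree, smul_eq_mul, ← sum_mul] at hedges
  rw [G.sum_degrees_eq_twice_card_edges] at hedges
  rw [Gᶜ.sum_degrees_eq_twice_card_edges] at hcherry hpoint
  nlinarith

theorem isNClique_insert_neighborFinset {v : V}
    (h : ∀ u, G.Adj v u → G.degree v - 1 ≤ #(G.neighborFinset u ∩ G.neighborFinset v)) :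
    G.IsNClique (G.degree v + 1) (insert v (G.neighborFinset v)) := by
  refine ⟨?_, by rw [card_insert_of_notMem (by simp), card_neighborFinset_eq_degree]⟩
  rw [coe_insert, isClique_insert]
  refine ⟨fun u hu w hw huw => ?_, fun u hu _ => (G.mem_neighborFinset v u).1 hu⟩
  have hcommon : G.neighborFinset u ∩ G.neighborFinset v = (G.neighborFinset v).erase u := by
    refine eq_of_subset_of_card_le (fun x hx => mem_erase.2 ⟨?_, (mem_inter.1 hx).2⟩) ?_
    · rintro rfl
      simp at hx
    · rw [card_erase_of_mem hu, card_neighborFinset_eq_degree]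
      exact h u ((G.mem_neighborFinset v u).1 hu)
  have hw' : w ∈ (G.neighborFinset v).erase u := mem_erase.2 ⟨huw.symm, hw⟩
  rw [← hcommon] at hw'
  exact (G.mem_neighborFinset u w).1 (mem_inter.1 hw').1

end Finite

theorem hasCompleteMinor_six_of_five_le_degree {W : Type*} [Fintype W] {G : SimpleGraph W}
    [DecidableRel G.Adj] (h11 : Fintype.card W ≤ 11) (he : #G.edgeFinset + 9 = 4 * Fintype.card W)
    (hdeg : ∀ v, 5 ≤ G.degree v)
    (hcommon : ∀ u v, G.Adj u v → 4 ≤ #(G.neighborFinset u ∩ G.neighborFinset v)) :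
    G.HasCompleteMinor 6 := by
  by_cases hfive : ∃ v, G.degree v = 5
  · obtain ⟨v, hv⟩ := hfive
    have hclique := G.isNClique_insert_neighborFinset (v := v) fun u hu => by
      rw [hv]; exact hcommon u v hu.symm
    rw [hv] at hclique
    exact .of_not_cliqueFree fun h => h _ hclique
  · push Not at hfive
    have hsix : ∀ v, 6 ≤ G.degree v := fun v => (hdeg v).lt_of_ne (hfive v).symm
    have hcount := G.mul_card_edgeFinset_compl_add_le hsix hcommon
    have hcompl := G.card_edgeFinset_add_card_edgeFinset_compl
    obtain ⟨v⟩ : Nonempty W := Fintype.card_pos_iff.1 (by omega)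
    have hv := G.degree_lt_card_verts v
    have hv6 := hsix v
    rw [Nat.choose_two_right] at hcompl
    set n := Fintype.card W
    interval_cases n <;> omega

theorem hasCompleteMinor_six_of_le_card_edgeFinset {W : Type*} [Fintype W] (G : SimpleGraph W)
    [DecidableRel G.Adj] (h5 : 5 ≤ Fintype.card W) (h11 : Fintype.card W ≤ 11)
    (he : 4 * Fintype.card W ≤ #G.edgeFinset + 9) : G.HasCompleteMinor 6 := by
  obtain ⟨n, hn⟩ : ∃ n, Fintype.card W = n := ⟨_, rfl⟩
  induction n generalizing W with
  | zero => omega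
  | succ n ih =>
    have hmax := G.card_edgeFinset_le_card_choose_two
    rw [Nat.choose_two_right] at hmax
    have h6 : 6 ≤ n + 1 := by
      by_contra
      rw [show Fintype.card W = 5 by omega] at hmax
      omega
    obtain ⟨H, hHG, hH⟩ := G.exists_le_card_edgeFinset_eq (k := 4 * (n + 1) - 9) (by omega)
    refine HasCompleteMinor.mono hHG ?_
    have hcard : ∀ v : W, Fintype.card ({v}ᶜ : Set W) = n := fun v => by
      rw [Fintype.card_compl_set, Set.card_singleton]
      omega
    by_cases hdeg : ∃ v, H.degree v ≤ 4
    · obtain ⟨v, hv⟩ := hdeg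
      have hedges : #(H.induce {v}ᶜ).edgeFinset = #H.edgeFinset - H.degree v := by
        rw [card_edgeFinset_induce_compl_singleton, card_edgeFinset_deleteIncidenceSet]
      have hvE := H.degree_le_card_edgeFinset v
      have hn' := hcard v
      exact .of_induce (ih _ (by omega) (by omega) (by omega) hn')
    by_cases hcommon : ∃ u v, H.Adj u v ∧ #(H.neighborFinset u ∩ H.neighborFinset v) ≤ 3
    · obtain ⟨u, v, huv, huv3⟩ := hcommon
      have hedges : #((H.contractEdge u v).induce {v}ᶜ).edgeFinset =
          #(H.contractEdge u v).edgeFinset :=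
        card_edgeFinset_induce_of_support_subset fun x ⟨_, hx⟩ => hx.2.1
      have hcontract := H.card_edgeFinset_le_card_edgeFinset_contractEdge_add huv
      have hn' := hcard v
      exact .of_contractEdge huv (ih _ (by omega) (by omega) (by omega) hn')
    push Not at hdeg hcommon
    exact hasCompleteMinor_six_of_five_le_degree (by omega) (by omega) hdeg hcommon

end SimpleGraph

theorem order11_size35_hasK6Minor {V : Type*} [Fintype V] (G : SimpleGraph V)
    (hcard : Fintype.card V = 11) (hsize : 35 ≤ G.edgeFinset.card) :
    G.HasCompleteMinor 6 :=
  G.hasCompleteMinor_six_of_le_card_edgeFinset (by omega) (by omega) (by omega)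
end

section
/- Let G be a simple graph of order 12 with minimum degree at least 6, let v be a vertex of G of degree 6 with neighborhood N(v) of size 6, and suppose the subgraph of G induced on the 5 vertices outside {v} ∪ N(v) is a complete graph K_5. Then G contains a K_6 minor. -/
attribute [local instance] Classical.propDecidable

/-!
Contract the closed neighbourhood `{v} ∪ N(v)` to a single branch set, which is connected
through `v`, and keep the five outer vertices as singleton branch sets; they form a `K_5`.
Each outer vertex has degree at least `6` but only four neighbours outside `{v} ∪ N(v)`,
so it is adjacent to the contracted set, which therefore completes the `K_5` to a `K_6`.
-/

namespace SimpleGraph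

variable {V : Type*} (G : SimpleGraph V)

theorem connected_induce_insert_neighborSet (v : V) :
    (G.induce (insert v (G.neighborSet v))).Connected := by
  refine G.induce_connected_of_patches v (Set.mem_insert _ _) fun {w} hw => ?_
  rcases Set.mem_insert_iff.mp hw with rfl | hvw
  · exact ⟨{w}, by simp, rfl, rfl, .rfl⟩
  · refine ⟨{v, w}, Set.insert_subset_insert (Set.singleton_subset_iff.mpr hvw),
      Set.mem_insert _ _, Set.mem_insert_of_mem _ rfl, ?_⟩
    exact (G.induce_pair_connected_of_adj hvw).preconnected _ _

theorem exists_adj_mem_of_ncard_compl_le [Finite V] {S : Set V} {u : V} (hu : u ∉ S)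
    (h : Sᶜ.ncard ≤ (G.neighborSet u).ncard) : ∃ w ∈ S, G.Adj u w := by
  by_contra! hS
  have hsub : G.neighborSet u ⊆ Sᶜ \ {u} := fun w hw =>
    ⟨fun hwS => hS w hwS hw, fun hwu => G.loopless.irrefl u (hwu ▸ hw)⟩
  exact (h.trans (Set.ncard_le_ncard hsub)).not_gt (Set.ncard_sdiff_singleton_lt_of_mem hu)

theorem hasCompleteMinor_succ_of_isClique {t : ℕ} {S : Set V} (hS : (G.induce S).Connected)
    (f : Fin t ↪ V) (hfS : ∀ i, f i ∉ S) (hf : G.IsClique (Set.range f))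
    (hadj : ∀ i, ∃ w ∈ S, G.Adj (f i) w) : G.HasCompleteMinor (t + 1) := by
  have hS' : S.Nonempty := Set.nonempty_coe_sort.mp hS.nonempty
  refine ⟨Fin.cons S fun i => {f i}, ?_, ?_, ?_, ?_⟩
  · intro i
    cases i using Fin.cases <;> simp [hS']
  · intro i
    cases i using Fin.cases
    · exact hS
    · change (G.induce {f _}).Connected
      rw [induce_singleton_eq_top]
      exact connected_top
  · intro i j hij
    cases i using Fin.cases <;> cases j using Fin.cases
    · exact absurd rfl hij
    · simpa using hfS _
    · simpa using hfS _
    · simpa [f.injective.eq_iff] using hij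
  · intro i j hij
    cases i using Fin.cases <;> cases j using Fin.cases
    · exact absurd rfl hij
    · obtain ⟨w, hw, h⟩ := hadj _
      exact ⟨w, hw, _, rfl, h.symm⟩
    · obtain ⟨w, hw, h⟩ := hadj _
      exact ⟨_, rfl, w, hw, h⟩
    · simp only [Fin.cons_succ, Set.mem_singleton_iff, exists_eq_left]
      exact hf (Set.mem_range_self _) (Set.mem_range_self _)
        (f.injective.ne (fun h => hij (congrArg _ h)))

end SimpleGraph

theorem order12_minDegree6_outsideK5_hasK6Minor_general {V : Type*} [Fintype V] (G : SimpleGraph V)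
    (hcard : Fintype.card V = 12) (hdeg : ∀ u : V, 6 ≤ G.degree u)
    (v : V)
    (hnbhd : (G.neighborSet v).ncard = 6)
    (hK5 : ∀ u w : V, u ∉ insert v (G.neighborSet v) → w ∉ insert v (G.neighborSet v) →
      u ≠ w → G.Adj u w) :
    G.HasCompleteMinor 6 := by
  set S := insert v (G.neighborSet v)
  have hS : S.ncard = 7 := by
    rw [Set.ncard_insert_of_notMem G.notMem_neighborSet_self, hnbhd]
  have hSc : Sᶜ.ncard = 5 :=
    Set.ncard_compl_of_ncard_eq_add S (by rw [Nat.card_eq_fintype_card, hcard, hS])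
  let e : Fin 5 ≃ ↥Sᶜ := (Fintype.equivFinOfCardEq
    (by rw [← Nat.card_eq_fintype_card, Nat.card_coe_set_eq, hSc])).symm
  have hSc_le_degree (u : V) : Sᶜ.ncard ≤ (G.neighborSet u).ncard := by
    rw [hSc, Set.ncard_eq_toFinset_card', Set.toFinset_card, G.card_neighborSet_eq_degree]
    exact (Nat.le_succ 5).trans (hdeg u)
  refine G.hasCompleteMinor_succ_of_isClique (G.connected_induce_insert_neighborSet v)
    (e.toEmbedding.trans (Function.Embedding.subtype _)) (fun i => (e i).2) ?_
    (fun i => G.exists_adj_mem_of_ncard_compl_le (e i).2 (hSc_le_degree _))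
  rintro _ ⟨i, rfl⟩ _ ⟨j, rfl⟩ hij
  exact hK5 _ _ (e i).2 (e j).2 hij

theorem order12_minDegree6_outsideK5_hasK6Minor {V : Type*} [Fintype V] (G : SimpleGraph V)
    (hcard : Fintype.card V = 12) (hdeg : ∀ u : V, 6 ≤ G.degree u)
    (v : V) (hv : G.degree v = 6)
    (hnbhd : (G.neighborSet v).ncard = 6)
    (hK5 : ∀ u w : V, u ∉ insert v (G.neighborSet v) → w ∉ insert v (G.neighborSet v) →
      u ≠ w → G.Adj u w) :
    G.HasCompleteMinor 6 :=
  order12_minDegree6_outsideK5_hasK6Minor_general G hcard hdeg v hnbhd hK5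
end
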